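/- arXiv:1907.13553 — 2 statements merged into one kernel-verified Lean document; each statement's English description precedes it below -/
import Mathlib

section
/- Let R : U^{n'} → U^{n'} be the operator that samples n' points uniformly with replacement from its input dataset, and let A be (ε̂, δ̂)-differentially private. Fix a bound r₀. Then for neighboring inputs S₁'', S₂'' differing at index j, conditioned on the event that index j is sampled at most r₀ times by R, the composition A∘R satisfies: for every measurable O, Pr[A(R(S₁'')) ∈ O | r ≤ r₀] ≤ e^{r₀ ε̂}·Pr[A(R(S₂'')) ∈ O | r ≤ r₀] + r₀ e^{r₀ ε̂} δ̂, where r is the number of times index j is sampled (the sampling event is identical in distribution for both inputs). -/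
open MeasureTheory
open scoped ENNReal

/-!
For every index map `σ` drawing `j` at most `r₀` times, the datasets `S₁ ∘ σ` and `S₂ ∘ σ`
differ in at most `r₀` positions. Group privacy, i.e. the DP inequality iterated along a path
of at most `r₀` neighbouring datasets, bounds `A (S₁ ∘ σ) O` pointwise on that event, and
integrating this affine bound over the event gives the claim.
-/

theorem hammingDist_update_lt {ι : Type*} [Fintype ι] [DecidableEq ι] {β : ι → Type*}
    [∀ i, DecidableEq (β i)] {x y : ∀ i, β i} {i : ι} (h : x i ≠ y i) :
    hammingDist (Function.update x i (y i)) y < hammingDist x y := by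
  refine Finset.card_lt_card (Finset.ssubset_iff_of_subset ?_ |>.mpr ⟨i, by simpa, by simp⟩)
  intro l hl
  rcases eq_or_ne l i with rfl | hli
  · simp at hl
  · simpa [Function.update_of_ne hli] using hl

theorem hammingDist_comp_le_card_fiber {ι κ U : Type*} [Fintype κ] [DecidableEq ι]
    [DecidableEq U] {x y : ι → U} {j : ι} (h : ∀ i ≠ j, x i = y i) (σ : κ → ι) :
    hammingDist (x ∘ σ) (y ∘ σ) ≤ (Finset.univ.filter fun k => σ k = j).card :=
  Finset.card_le_card fun k hk => by
    simp only [Finset.mem_filter, Finset.mem_univ, true_and, Function.comp_apply] at hk ⊢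
    by_contra hkj
    exact hk (h _ hkj)

theorem group_privacy_delta_step_le {ε δ : ℝ} (hε : 0 ≤ ε) (hδ : 0 ≤ δ) (k : ℕ) :
    Real.exp ε * (k * Real.exp (k * ε) * δ) + δ ≤ (k + 1) * Real.exp ((k + 1) * ε) * δ := by
  have hexp : Real.exp ε * Real.exp (k * ε) = Real.exp ((k + 1) * ε) := by
    rw [← Real.exp_add]; ring_nf
  have hone : δ ≤ Real.exp ((k + 1) * ε) * δ :=
    le_mul_of_one_le_left hδ (Real.one_le_exp (by positivity))
  calc Real.exp ε * (k * Real.exp (k * ε) * δ) + δ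
      = k * Real.exp ((k + 1) * ε) * δ + δ := by rw [← hexp]; ring
    _ ≤ (k + 1) * Real.exp ((k + 1) * ε) * δ := by linarith

theorem group_privacy {ι U : Type*} [Fintype ι] [DecidableEq ι] [DecidableEq U]
    (f : (ι → U) → ℝ≥0∞) {ε δ : ℝ} (hε : 0 ≤ ε) (hδ : 0 ≤ δ)
    (hDP : ∀ S S' : ι → U, (∃ i, ∀ j ≠ i, S j = S' j) →
      f S ≤ ENNReal.ofReal (Real.exp ε) * f S' + ENNReal.ofReal δ)
    (k : ℕ) {S S' : ι → U} (hk : hammingDist S S' ≤ k) :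
    f S ≤ ENNReal.ofReal (Real.exp (k * ε)) * f S' + ENNReal.ofReal (k * Real.exp (k * ε) * δ) := by
  induction k generalizing S with
  | zero => simp [hammingDist_eq_zero.mp (Nat.le_zero.mp hk)]
  | succ k ih =>
    by_cases hSS : S = S'
    · subst hSS
      refine le_add_right (le_mul_of_one_le_left' ?_)
      exact ENNReal.one_le_ofReal.mpr (Real.one_le_exp (by positivity))
    obtain ⟨i, hi⟩ := Function.ne_iff.mp hSS
    have hupdate : hammingDist (Function.update S i (S' i)) S' ≤ k := by
      have := hammingDist_update_lt hi
      omega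
    calc f S ≤ ENNReal.ofReal (Real.exp ε) * f (Function.update S i (S' i))
            + ENNReal.ofReal δ :=
          hDP _ _ ⟨i, fun l hl => (Function.update_of_ne hl _ _).symm⟩
      _ ≤ ENNReal.ofReal (Real.exp ε) * (ENNReal.ofReal (Real.exp (k * ε)) * f S'
            + ENNReal.ofReal (k * Real.exp (k * ε) * δ)) + ENNReal.ofReal δ := by
          gcongr
          exact ih hupdate
      _ = ENNReal.ofReal (Real.exp ((k + 1) * ε)) * f S'
            + ENNReal.ofReal (Real.exp ε * (k * Real.exp (k * ε) * δ) + δ) := by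
          rw [mul_add, ← mul_assoc, ← ENNReal.ofReal_mul (Real.exp_nonneg _), ← Real.exp_add,
            ← ENNReal.ofReal_mul (Real.exp_nonneg _), add_assoc,
            ← ENNReal.ofReal_add (by positivity) hδ]
          ring_nf
      _ ≤ _ := by
          push_cast
          gcongr
          exact group_privacy_delta_step_le hε hδ k

/-- conditional group privacy for the composition `A ∘ R`, where `R`
samples `n'` points uniformly with replacement (modeled as a uniformly random index
map `σ : Fin n' → Fin n'`) and `A` is `(εh, δh)`-DP. For neighboring inputs differing
at index `j`, conditioned on the event `E = {σ : index j is sampled at most r₀ times}`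
(an event identical in distribution for both inputs), the conditional output
probabilities satisfy the `(r₀ εh, r₀ e^{r₀ εh} δh)`-DP inequality. The conditional
probabilities `Pr[· | E]` are written with both sides multiplied by `μ E`. -/
theorem stmt_6 {U Ω : Type*} [MeasurableSpace Ω] (n' : ℕ) [NeZero n']
    (A : (Fin n' → U) → Measure Ω) (εh δh : ℝ) (hε : 0 ≤ εh) (hδ : 0 ≤ δh)
    (hDP : ∀ S S' : Fin n' → U, (∃ i, ∀ j ≠ i, S j = S' j) →
      ∀ O : Set Ω, MeasurableSet O →
        A S O ≤ ENNReal.ofReal (Real.exp εh) * A S' O + ENNReal.ofReal δh)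
    (j : Fin n') (S₁ S₂ : Fin n' → U) (hneighbor : ∀ j' ≠ j, S₁ j' = S₂ j')
    (r₀ : ℕ) (O : Set Ω) (hO : MeasurableSet O) :
    (∫⁻ σ in {σ : Fin n' → Fin n' | (Finset.univ.filter fun i => σ i = j).card ≤ r₀},
        A (S₁ ∘ σ) O ∂(PMF.uniformOfFintype (Fin n' → Fin n')).toMeasure)
      ≤ ENNReal.ofReal (Real.exp (r₀ * εh)) *
          (∫⁻ σ in {σ : Fin n' → Fin n' |
              (Finset.univ.filter fun i => σ i = j).card ≤ r₀},
            A (S₂ ∘ σ) O ∂(PMF.uniformOfFintype (Fin n' → Fin n')).toMeasure)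
        + ENNReal.ofReal (r₀ * Real.exp (r₀ * εh) * δh) *
            (PMF.uniformOfFintype (Fin n' → Fin n')).toMeasure
              {σ : Fin n' → Fin n' | (Finset.univ.filter fun i => σ i = j).card ≤ r₀} := by
  classical
  set μ := (PMF.uniformOfFintype (Fin n' → Fin n')).toMeasure
  set E := {σ : Fin n' → Fin n' | (Finset.univ.filter fun i => σ i = j).card ≤ r₀}
  have hpointwise : ∀ σ ∈ E, A (S₁ ∘ σ) O ≤ ENNReal.ofReal (Real.exp (r₀ * εh)) * A (S₂ ∘ σ) O
      + ENNReal.ofReal (r₀ * Real.exp (r₀ * εh) * δh) := fun σ hσ =>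
    group_privacy (fun S => A S O) hε hδ (fun S S' h => hDP S S' h O hO) r₀
      ((hammingDist_comp_le_card_fiber hneighbor σ).trans hσ)
  calc (∫⁻ σ in E, A (S₁ ∘ σ) O ∂μ)
      ≤ ∫⁻ σ in E, (ENNReal.ofReal (Real.exp (r₀ * εh)) * A (S₂ ∘ σ) O
          + ENNReal.ofReal (r₀ * Real.exp (r₀ * εh) * δh)) ∂μ :=
        setLIntegral_mono (measurable_of_finite _) hpointwise
    _ = _ := by
        rw [lintegral_add_right _ measurable_const,
          lintegral_const_mul _ (measurable_of_finite _), setLIntegral_const]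
end

section
/- Sauer's lemma: if H ⊆ {0,1}^X has VC dimension at most d, then for every finite V ⊆ X with |V| = t ≥ d ≥ 1, the number of dichotomies |Π_H(V)| ≤ Σ_{i=0}^{d} C(t,i) ≤ (et/d)^d. -/
/-- The set of dichotomies realized by a class on a finite set. -/
def dichotomies {X : Type*} (F : Set (X → Bool)) (V : Finset X) : Set (V → Bool) :=
  (fun (f : X → Bool) (x : V) => f (x : X)) '' F

/-- `F` shatters the finite set `V`. -/
def Shatters {X : Type*} (F : Set (X → Bool)) (V : Finset X) : Prop :=
  ∀ g : X → Bool, ∃ f ∈ F, ∀ x ∈ V, f x = g x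

/-!
Encode each dichotomy on `V` as the subset of `V` where it is `true`. A subset of `V` shattered by
the resulting set family is shattered by `H`, so the family has VC dimension at most `d`, and the
Sauer–Shelah lemma for finite set families bounds its size by `∑_{i ≤ d} C(t, i)`.

For the exponential bound, with `x = d / t ≤ 1`,
`(∑_{i ≤ d} C(t, i)) xᵈ ≤ ∑_{i ≤ d} C(t, i) xⁱ ≤ (1 + x)ᵗ ≤ eˣᵗ = eᵈ`.
-/

section
open Finset

variable {α : Type*} [Fintype α]

def trueSet : (α → Bool) ↪ Finset α where
  toFun g := {x | g x = true}
  inj' g₁ g₂ h := funext fun x ↦ Bool.eq_iff_iff.2 <| by simpa using congr(x ∈ $h)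

@[simp] lemma mem_trueSet {g : α → Bool} {x : α} : x ∈ trueSet g ↔ g x = true :=
  mem_filter.trans (and_iff_right (mem_univ x))

end

section
open Finset

variable {X : Type*} (H : Set (X → Bool)) (V : Finset X)

noncomputable def traceFamily : Finset (Finset V) :=
  (Set.toFinite (dichotomies H V)).toFinset.map trueSet

lemma ncard_dichotomies_eq_card_traceFamily :
    (dichotomies H V).ncard = #(traceFamily H V) := by
  rw [traceFamily, card_map, Set.ncard_eq_toFinset_card]

variable {H V} [DecidableEq X]

lemma shatters_of_shatters_traceFamily {s : Finset V} (hs : (traceFamily H V).Shatters s) :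
    Shatters H (s.map (Function.Embedding.subtype _)) := by
  intro g
  obtain ⟨A, hA, hsA⟩ := hs (filter_subset (fun x : V ↦ g x = true) s)
  obtain ⟨_, hd, rfl⟩ := mem_map.1 hA
  obtain ⟨f, hf, rfl⟩ := (Set.Finite.mem_toFinset _).1 hd
  refine ⟨f, hf, ?_⟩
  simp only [mem_map, Function.Embedding.coe_subtype, forall_exists_index, and_imp]
  rintro _ y hy rfl
  have := congr(y ∈ $hsA)
  simp only [mem_inter, mem_trueSet, mem_filter, hy, true_and, eq_iff_iff] at this
  exact Bool.eq_iff_iff.2 this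

lemma vcDim_traceFamily_le {d : ℕ} (hVC : ∀ W ⊆ V, Shatters H W → #W ≤ d) :
    (traceFamily H V).vcDim ≤ d :=
  Finset.sup_le fun s hs ↦ by
    simpa using hVC _ (by simp +contextual [subset_iff])
      (shatters_of_shatters_traceFamily (mem_shatterer.1 hs))

theorem ncard_dichotomies_le_sum_choose {d : ℕ} (hVC : ∀ W ⊆ V, Shatters H W → #W ≤ d) :
    (dichotomies H V).ncard ≤ ∑ i ∈ range (d + 1), (#V).choose i :=
  calc (dichotomies H V).ncard = #(traceFamily H V) := ncard_dichotomies_eq_card_traceFamily H V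
    _ ≤ #(traceFamily H V).shatterer := card_le_card_shatterer _
    _ ≤ ∑ k ∈ Iic (traceFamily H V).vcDim, (Fintype.card V).choose k :=
        card_shatterer_le_sum_vcDim
    _ ≤ ∑ i ∈ range (d + 1), (#V).choose i := by
        rw [Fintype.card_coe, Nat.range_succ_eq_Iic]
        exact sum_le_sum_of_subset (Iic_subset_Iic.2 (vcDim_traceFamily_le hVC))

end

section
open Finset

theorem sum_range_choose_mul_pow_le_one_add_pow {d t : ℕ} (hdt : d ≤ t) {x : ℝ}
    (hx₀ : 0 ≤ x) (hx₁ : x ≤ 1) :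
    (∑ i ∈ range (d + 1), (t.choose i : ℝ)) * x ^ d ≤ (1 + x) ^ t := by
  rw [sum_mul, add_comm 1 x, add_pow]
  calc ∑ i ∈ range (d + 1), (t.choose i : ℝ) * x ^ d
      ≤ ∑ i ∈ range (d + 1), x ^ i * 1 ^ (t - i) * t.choose i := by
        refine sum_le_sum fun i hi ↦ ?_
        rw [one_pow, mul_one, mul_comm]
        exact mul_le_mul_of_nonneg_right
          (pow_le_pow_of_le_one hx₀ hx₁ (Nat.lt_succ_iff.1 (mem_range.1 hi))) (by positivity)
    _ ≤ ∑ i ∈ range (t + 1), x ^ i * 1 ^ (t - i) * t.choose i :=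
        sum_le_sum_of_subset_of_nonneg (range_subset_range.2 (by omega))
          fun _ _ _ ↦ by positivity

theorem sum_range_choose_le_exp_mul_div_pow {d t : ℕ} (hdt : d ≤ t) :
    (∑ i ∈ range (d + 1), (t.choose i : ℝ)) ≤ (Real.exp 1 * t / d) ^ d := by
  rcases d.eq_zero_or_pos with rfl | hd
  · simp
  have ht : (0 : ℝ) < t := by exact_mod_cast hd.trans_le hdt
  have hx₁ : (d : ℝ) / t ≤ 1 := div_le_one_of_le₀ (by exact_mod_cast hdt) ht.le
  have key := sum_range_choose_mul_pow_le_one_add_pow hdt (by positivity) hx₁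
  have hexp : (1 + (d : ℝ) / t) ^ t ≤ Real.exp d := by
    calc (1 + (d : ℝ) / t) ^ t ≤ Real.exp (d / t) ^ t := by
          gcongr; linarith [Real.add_one_le_exp ((d : ℝ) / t)]
      _ = Real.exp d := by rw [← Real.exp_nat_mul, mul_div_cancel₀ _ ht.ne']
  rw [← le_div_iff₀ (by positivity)] at key
  calc _ ≤ Real.exp d / ((d : ℝ) / t) ^ d := key.trans (div_le_div_of_nonneg_right hexp (by positivity))
    _ = (Real.exp 1 * t / d) ^ d := by
        rw [← Real.exp_one_pow, ← div_pow, div_div_eq_mul_div]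

end

theorem stmt_18_general {X : Type*} (H : Set (X → Bool)) (d : ℕ)
    (hVC : ∀ V : Finset X, Shatters H V → V.card ≤ d)
    (t : ℕ) (ht : d ≤ t) (V : Finset X) (hV : V.card = t) :
    (dichotomies H V).ncard ≤ ∑ i ∈ Finset.range (d + 1), Nat.choose t i
      ∧ ((∑ i ∈ Finset.range (d + 1), Nat.choose t i : ℕ) : ℝ)
          ≤ (Real.exp 1 * t / d) ^ d := by
  classical
  subst hV
  refine ⟨ncard_dichotomies_le_sum_choose fun W _ ↦ hVC W, ?_⟩
  push_cast
  exact sum_range_choose_le_exp_mul_div_pow ht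

/-- Sauer's lemma: if `VC(H) ≤ d` then for every finite `V` with
`|V| = t ≥ d ≥ 1`, the number of dichotomies of `H` on `V` is at most
`Σ_{i=0}^d C(t,i)`, which is at most `(e t / d)^d`. -/
theorem stmt_18 {X : Type*} (H : Set (X → Bool)) (d : ℕ) (hd : 1 ≤ d)
    (hVC : ∀ V : Finset X, Shatters H V → V.card ≤ d)
    (t : ℕ) (ht : d ≤ t) (V : Finset X) (hV : V.card = t) :
    (dichotomies H V).ncard ≤ ∑ i ∈ Finset.range (d + 1), Nat.choose t i
      ∧ ((∑ i ∈ Finset.range (d + 1), Nat.choose t i : ℕ) : ℝ)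
          ≤ (Real.exp 1 * t / d) ^ d :=
  stmt_18_general H d hVC t ht V hV
end
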